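/- arXiv:2207.02528 — 3 statements merged into one kernel-verified Lean document; each statement's English description precedes it below -/
import Mathlib

section
/- Let G₁ be obtained from a finite hypergraph G = (V, E) by adding a k-dominating set S = {v₁, …, v_k} with k ≥ 2. For each i = 2, …, k, the function y_i on V ∪ S defined by y_i(v₁) = 1, y_i(v_i) = −1 and y_i = 0 elsewhere is an eigenvector of L_{G₁} with eigenvalue (k+1)|V|/k. In particular (k+1)|V|/k is an eigenvalue of L_{G₁} with multiplicity at least k − 1. -/
open Finset

/-- The hypergraph Laplacian as an operator on real-valued vertex functions:
`(L_G f)(v) = ∑_{e ∋ v} (1/(|e|-1)) ∑_{u ∈ e} (f v - f u)`. -/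
noncomputable def lapOp {V : Type} [Fintype V] [DecidableEq V] (E : Finset (Finset V)) (f : V → ℝ) : V → ℝ :=
  fun v => ∑ e ∈ E.filter (fun e => v ∈ e), (1 / ((e.card : ℝ) - 1)) * ∑ u ∈ e, (f v - f u)

/-- The matrix of the hypergraph Laplacian. -/
noncomputable def lapMatrix {V : Type} [Fintype V] [DecidableEq V] (E : Finset (Finset V)) : Matrix V V ℝ :=
  Matrix.of fun v w => ∑ e ∈ E.filter (fun e => v ∈ e),
    (1 / ((e.card : ℝ) - 1)) * ((if w = v then (e.card : ℝ) else 0) - (if w ∈ e then 1 else 0))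

/-- Edge set obtained from `E` by adding a `k`-dominating set `S = Fin k` of fresh vertices:
the new edges are `S ∪ {u}` for every old vertex `u`. -/
def domEdges {V : Type} [Fintype V] [DecidableEq V] (E : Finset (Finset V)) (k : ℕ) :
    Finset (Finset (V ⊕ Fin k)) :=
  E.image (Finset.image Sum.inl) ∪
    (Finset.univ : Finset V).image
      (fun u => insert (Sum.inl u) ((Finset.univ : Finset (Fin k)).image Sum.inr))

/-- The function taking value `1` at the first dominating vertex, `-1` at the `i`-th one and
`0` elsewhere. -/
noncomputable def yFun {V : Type} (k : ℕ) (i : Fin k) : V ⊕ Fin k → ℝ :=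
  Sum.elim (fun _ => 0) (fun j => if j.val = 0 then 1 else if j = i then -1 else 0)

/-! The functions `f` on `V ∪ S` that vanish on `V` and sum to zero over `S` form an eigenspace
of `L_{G₁}`. Such an `f` sums to zero over every edge of `G₁`, so each edge `e` contributes
`|e| f(v) / (|e| - 1)` at `v`. At an old vertex this is `0`; a dominating vertex lies exactly in
the `|V|` new edges, each of size `k + 1`, giving `(k + 1)|V| f(v) / k`. The `y_i` are such
functions, and they are independent because `y_i` is `-1` at `v_i` and `0` at the other `v_j`,
`j ≥ 2`. -/

theorem Finset.sum_sub_eq_card_mul_of_sum_eq_zero {α R : Type*} [Ring R] (e : Finset α)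
    (f : α → R) (hf : ∑ u ∈ e, f u = 0) (x : R) :
    ∑ u ∈ e, (x - f u) = e.card * x := by
  rw [sum_sub_distrib, hf, sum_const, nsmul_eq_mul, sub_zero]

section DominatingSet

variable {V : Type} [DecidableEq V] {k : ℕ}

def domEdge (k : ℕ) (u : V) : Finset (V ⊕ Fin k) :=
  insert (Sum.inl u) (univ.image Sum.inr)

theorem domEdges_eq [Fintype V] (E : Finset (Finset V)) (k : ℕ) :
    domEdges E k = E.image (image Sum.inl) ∪ univ.image (domEdge k) := rfl

theorem card_domEdge (u : V) : (domEdge k u).card = k + 1 := by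
  rw [domEdge, card_insert_of_notMem (by simp), card_image_of_injective _ Sum.inr_injective,
    card_univ, Fintype.card_fin]

theorem domEdge_injective : Function.Injective (domEdge (V := V) k) := by
  intro a b h
  have : Sum.inl a ∈ domEdge k b := h ▸ mem_insert_self _ _
  simpa [domEdge] using this

theorem sum_domEdge (f : V ⊕ Fin k → ℝ) (u : V) :
    ∑ x ∈ domEdge k u, f x = f (Sum.inl u) + ∑ j, f (Sum.inr j) := by
  rw [domEdge, sum_insert (by simp), sum_image fun _ _ _ _ h => Sum.inr_injective h]

theorem filter_mem_domEdges_inr [Fintype V] (E : Finset (Finset V)) (j : Fin k) :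
    (domEdges E k).filter (Sum.inr j ∈ ·) = univ.image (domEdge k) := by
  ext e
  simp only [domEdges_eq, mem_filter, mem_union, mem_image, mem_univ, true_and]
  constructor
  · rintro ⟨⟨e₀, -, rfl⟩ | hnew, hj⟩
    · simp at hj
    · exact hnew
  · rintro ⟨u, rfl⟩
    exact ⟨Or.inr ⟨u, rfl⟩, by simp [domEdge]⟩

variable {f : V ⊕ Fin k → ℝ}

theorem sum_eq_zero_of_mem_domEdges [Fintype V] (hV : ∀ w, f (Sum.inl w) = 0)
    (hS : ∑ j, f (Sum.inr j) = 0) {E : Finset (Finset V)} {e : Finset (V ⊕ Fin k)}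
    (he : e ∈ domEdges E k) : ∑ u ∈ e, f u = 0 := by
  rw [domEdges_eq, mem_union, mem_image, mem_image] at he
  rcases he with ⟨e₀, -, rfl⟩ | ⟨u, -, rfl⟩
  · rw [sum_image fun _ _ _ _ h => Sum.inl_injective h]
    exact sum_eq_zero fun w _ => hV w
  · rw [sum_domEdge, hV, hS, add_zero]

theorem lapOp_domEdges_eq_smul [Fintype V] (E : Finset (Finset V)) (hV : ∀ w, f (Sum.inl w) = 0)
    (hS : ∑ j, f (Sum.inr j) = 0) :
    lapOp (domEdges E k) f = (((k : ℝ) + 1) * Fintype.card V / k) • f := by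
  have hterm : ∀ v, ∀ e ∈ domEdges E k,
      1 / ((e.card : ℝ) - 1) * ∑ u ∈ e, (f v - f u) = e.card / ((e.card : ℝ) - 1) * f v :=
    fun v e he => by
      rw [sum_sub_eq_card_mul_of_sum_eq_zero e f (sum_eq_zero_of_mem_domEdges hV hS he)]
      ring
  funext v
  rw [Pi.smul_apply, smul_eq_mul, lapOp,
    sum_congr rfl fun e he => hterm v e (mem_filter.mp he).1]
  rcases v with w | j
  · simp [hV]
  · rw [filter_mem_domEdges_inr, sum_image fun a _ b _ h => domEdge_injective h]
    simp only [card_domEdge, sum_const, card_univ, nsmul_eq_mul]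
    push_cast
    ring

end DominatingSet

section Eigenvectors

variable {V : Type} {k : ℕ}

theorem sum_yFun_inr {i : Fin k} (hi : i.val ≠ 0) : ∑ j, yFun (V := V) k i (Sum.inr j) = 0 := by
  have h0 : 0 < k := i.pos
  have hy : ∀ j : Fin k, yFun (V := V) k i (Sum.inr j) =
      (if j = ⟨0, h0⟩ then 1 else 0) + (if j = i then -1 else 0) := by
    intro j
    simp only [yFun, Sum.elim_inr, Fin.ext_iff]
    split_ifs <;> simp_all
  simp only [hy, sum_add_distrib, sum_ite_eq', mem_univ, if_true]
  norm_num

theorem yFun_ne_zero (i : Fin k) : yFun (V := V) k i ≠ 0 := fun h => by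
  simpa [yFun] using congrFun h (Sum.inr ⟨0, i.pos⟩)

theorem yFun_inr_of_ne_zero {i j : Fin k} (hj : j.val ≠ 0) :
    yFun (V := V) k i (Sum.inr j) = -(Pi.single i 1 : Fin k → ℝ) j := by
  by_cases h : j = i
  · subst h; simp [yFun, hj]
  · simp [yFun, hj, h]

theorem linearIndependent_yFun :
    LinearIndependent ℝ (fun i : {i : Fin k // i.val ≠ 0} => yFun (V := V) k i.val) := by
  let restrict :=
    LinearMap.funLeft ℝ ℝ (fun i : {i : Fin k // i.val ≠ 0} => Sum.inr (α := V) i.val)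
  refine LinearIndependent.of_comp restrict ?_
  have hcomp : restrict ∘ (fun i : {i : Fin k // i.val ≠ 0} => yFun (V := V) k i.val) =
      -fun i => Pi.single i 1 := by
    funext i j
    simp [restrict, LinearMap.funLeft_apply, yFun_inr_of_ne_zero j.prop, Pi.single_apply,
      Subtype.ext_iff]
  rw [hcomp]
  exact (Pi.linearIndependent_single_one _ ℝ).neg

end Eigenvectors

theorem stmt_2_general {V : Type} [Fintype V] [DecidableEq V]
    (E : Finset (Finset V)) (k : ℕ) :
    (∀ i : Fin k, i.val ≠ 0 →
        yFun (V := V) k i ≠ 0 ∧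
        lapOp (domEdges E k) (yFun k i) =
          (((k : ℝ) + 1) * (Fintype.card V) / k) • yFun (V := V) k i) ∧
      LinearIndependent ℝ (fun i : {i : Fin k // i.val ≠ 0} => yFun (V := V) k i.val) :=
  ⟨fun i hi => ⟨yFun_ne_zero i,
    lapOp_domEdges_eq_smul E (fun _ => rfl) (sum_yFun_inr hi)⟩, linearIndependent_yFun⟩

/-- Each `y_i` (`i = 2, …, k`) is an eigenvector of `L_{G₁}` with eigenvalue `(k+1)|V|/k`;
these `k - 1` eigenvectors are linearly independent, so this eigenvalue has multiplicity
at least `k - 1`. -/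
theorem stmt_2 {V : Type} [Fintype V] [DecidableEq V]
    (E : Finset (Finset V)) (hE : ∀ e ∈ E, 2 ≤ e.card) (k : ℕ) (hk : 2 ≤ k) :
    (∀ i : Fin k, i.val ≠ 0 →
        yFun (V := V) k i ≠ 0 ∧
        lapOp (domEdges E k) (yFun k i) =
          (((k : ℝ) + 1) * (Fintype.card V) / k) • yFun (V := V) k i) ∧
      LinearIndependent ℝ (fun i : {i : Fin k // i.val ≠ 0} => yFun (V := V) k i.val) :=
  stmt_2_general E k
end

section
/- Let G₁ be obtained from a finite hypergraph G = (V, E) by adding a k-dominating set S. The function y on V ∪ S defined by y(v) = −k/|V| for v ∈ V and y(v) = 1 for v ∈ S is an eigenvector of L_{G₁} with eigenvalue (|V| + k)/k. -/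
open Finset

/-! Every old edge lies inside `V`, where `y` is constant, so it contributes nothing to `L_{G₁} y`.
On a new edge `S ∪ {u}` (of size `k + 1`) the function `y` takes the value `-k/|V|` once and `1`
on the other `k` vertices, so `L_{G₁} y` is `-k/|V| - 1` at `u` and, summing over the `|V|` new
edges through a vertex of `S`, `|V| (1 + k/|V|) / k` there; both are `(|V| + k)/k` times `y`. -/

theorem lapOp_union {V : Type} [Fintype V] [DecidableEq V] {E₁ E₂ : Finset (Finset V)}
    (h : Disjoint E₁ E₂) (f : V → ℝ) : lapOp (E₁ ∪ E₂) f = lapOp E₁ f + lapOp E₂ f := by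
  funext v
  simp only [lapOp, Pi.add_apply, filter_union, sum_union (disjoint_filter_filter h)]

theorem lapOp_eq_zero_of_forall_edge {V : Type} [Fintype V] [DecidableEq V]
    {E : Finset (Finset V)} {f : V → ℝ} (hf : ∀ e ∈ E, ∀ u ∈ e, ∀ w ∈ e, f u = f w) :
    lapOp E f = 0 := by
  funext v
  refine sum_eq_zero fun e he => ?_
  rw [mem_filter] at he
  rw [sum_eq_zero fun u hu => sub_eq_zero.2 (hf e he.1 v he.2 u hu), mul_zero]

theorem lapOp_image_inl_sumElim_const {V W : Type} [Fintype V] [DecidableEq V] [Fintype W]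
    [DecidableEq W] (E : Finset (Finset V)) (a : ℝ) (g : W → ℝ) :
    lapOp (E.image (image Sum.inl)) (Sum.elim (fun _ => a) g) = 0 :=
  lapOp_eq_zero_of_forall_edge fun e he _ hu _ hw => by
    obtain ⟨e, -, rfl⟩ := mem_image.1 he
    obtain ⟨u, -, rfl⟩ := mem_image.1 hu
    obtain ⟨w, -, rfl⟩ := mem_image.1 hw
    rfl

section Star

variable {V : Type} [DecidableEq V] {k : ℕ}

def starEdge (k : ℕ) (u : V) : Finset (V ⊕ Fin k) := insert (Sum.inl u) (univ.image Sum.inr)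

theorem inl_mem_starEdge {u w : V} : (Sum.inl w : V ⊕ Fin k) ∈ starEdge k u ↔ w = u := by
  simp [starEdge]

theorem inr_mem_starEdge (u : V) (j : Fin k) : (Sum.inr j : V ⊕ Fin k) ∈ starEdge k u := by
  simp [starEdge]

theorem sum_starEdge (u : V) (f : V ⊕ Fin k → ℝ) :
    ∑ x ∈ starEdge k u, f x = f (Sum.inl u) + ∑ j, f (Sum.inr j) := by
  rw [starEdge, sum_insert (by simp), sum_image fun _ _ _ _ h => Sum.inr_injective h]

theorem card_starEdge (u : V) : (starEdge k u).card = k + 1 := by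
  rw [starEdge, card_insert_of_notMem (by simp), card_image_of_injective _ Sum.inr_injective,
    card_univ, Fintype.card_fin]

theorem starEdge_injective : Function.Injective (starEdge (V := V) k) := fun _ _ h =>
  inl_mem_starEdge.1 (h ▸ inl_mem_starEdge.2 rfl)

variable [Fintype V]

variable (V k) in
def starEdges : Finset (Finset (V ⊕ Fin k)) := univ.image (starEdge k)

theorem domEdges_eq_union (E : Finset (Finset V)) :
    domEdges E k = E.image (image Sum.inl) ∪ starEdges V k := rfl

theorem disjoint_image_inl_starEdges (hk : 0 < k) (E : Finset (Finset V)) :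
    Disjoint (E.image (image Sum.inl)) (starEdges V k) := by
  refine disjoint_left.2 fun e he hstar => ?_
  obtain ⟨e, -, rfl⟩ := mem_image.1 he
  obtain ⟨u, -, hu⟩ := mem_image.1 hstar
  have hinr := inr_mem_starEdge (k := k) u ⟨0, hk⟩
  rw [hu] at hinr
  simp at hinr

theorem lapOp_starEdges_inl (hk : 0 < k) (a b : ℝ) (w : V) :
    lapOp (starEdges V k) (Sum.elim (fun _ => a) fun _ => b) (Sum.inl w) = a - b := by
  have hedges : (starEdges V k).filter (Sum.inl w ∈ ·) = {starEdge k w} := by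
    ext e
    simp only [starEdges, mem_filter, mem_image, mem_univ, true_and, mem_singleton]
    constructor
    · rintro ⟨⟨u, rfl⟩, hw⟩
      rw [inl_mem_starEdge.1 hw]
    · rintro rfl
      exact ⟨⟨w, rfl⟩, inl_mem_starEdge.2 rfl⟩
  have hk' : (k : ℝ) ≠ 0 := by positivity
  rw [lapOp, hedges, sum_singleton, card_starEdge, sum_starEdge]
  simp only [Sum.elim_inl, Sum.elim_inr, sub_self, zero_add, sum_const, card_univ,
    Fintype.card_fin, nsmul_eq_mul]
  push_cast
  rw [add_sub_cancel_right, one_div, inv_mul_cancel_left₀ hk']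

theorem lapOp_starEdges_inr (a b : ℝ) (j : Fin k) :
    lapOp (starEdges V k) (Sum.elim (fun _ => a) fun _ => b) (Sum.inr j) =
      Fintype.card V * (b - a) / k := by
  have hedges : (starEdges V k).filter (Sum.inr j ∈ ·) = starEdges V k :=
    filter_true_of_mem fun e he => by
      obtain ⟨u, -, rfl⟩ := mem_image.1 he
      exact inr_mem_starEdge u j
  rw [lapOp, hedges, starEdges, sum_image fun _ _ _ _ h => starEdge_injective h]
  simp only [card_starEdge, sum_starEdge, Sum.elim_inl, Sum.elim_inr, sub_self, sum_const_zero,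
    add_zero, Nat.cast_add, Nat.cast_one, add_sub_cancel_right, sum_const, card_univ, nsmul_eq_mul]
  ring

end Star

theorem stmt_3_general {V : Type} [Fintype V] [DecidableEq V] [Nonempty V]
    (E : Finset (Finset V)) (k : ℕ) (hk : 0 < k) :
    Sum.elim (fun _ : V => -(k : ℝ) / (Fintype.card V)) (fun _ : Fin k => (1 : ℝ)) ≠ 0 ∧
      lapOp (domEdges E k)
          (Sum.elim (fun _ : V => -(k : ℝ) / (Fintype.card V)) fun _ : Fin k => (1 : ℝ)) =
        (((Fintype.card V : ℝ) + k) / k) •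
          Sum.elim (fun _ : V => -(k : ℝ) / (Fintype.card V)) fun _ : Fin k => (1 : ℝ) := by
  refine ⟨fun h => by simpa using congrFun h (Sum.inr ⟨0, hk⟩), ?_⟩
  have hn : (Fintype.card V : ℝ) ≠ 0 := by positivity
  have hk' : (k : ℝ) ≠ 0 := by positivity
  rw [domEdges_eq_union, lapOp_union (disjoint_image_inl_starEdges hk E),
    lapOp_image_inl_sumElim_const, zero_add]
  funext v
  cases v with
  | inl w =>
    rw [lapOp_starEdges_inl hk, Pi.smul_apply, Sum.elim_inl, smul_eq_mul]
    field_simp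
    ring
  | inr j =>
    rw [lapOp_starEdges_inr, Pi.smul_apply, Sum.elim_inr, smul_eq_mul]
    field_simp
    ring

/-- The function with value `-k/|V|` on the old vertices and `1` on the dominating set is
an eigenvector of `L_{G₁}` with eigenvalue `(|V| + k)/k`. -/
theorem stmt_3 {V : Type} [Fintype V] [DecidableEq V] [Nonempty V]
    (E : Finset (Finset V)) (hE : ∀ e ∈ E, 2 ≤ e.card) (k : ℕ) (hk : 0 < k) :
    Sum.elim (fun _ : V => -(k : ℝ) / (Fintype.card V)) (fun _ : Fin k => (1 : ℝ)) ≠ 0 ∧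
      lapOp (domEdges E k)
          (Sum.elim (fun _ : V => -(k : ℝ) / (Fintype.card V)) fun _ : Fin k => (1 : ℝ)) =
        (((Fintype.card V : ℝ) + k) / k) •
          Sum.elim (fun _ : V => -(k : ℝ) / (Fintype.card V)) fun _ : Fin k => (1 : ℝ) :=
  stmt_3_general E k hk
end

section
/- For a k-threshold hypergraph with string 0^{m₁} k ⋯ 0^{m_d} k, the column sums C_j of the Ferrer's diagram of its degree sequence satisfy C_i = Σ_{j=1}^{d−i+1} m_j + k·d for all i = 1, …, d, and C_{D_{d−i+1}} = k(d − i + 1) for all i = 2, …, d, where D_i is the i-th largest distinct degree. -/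
open Finset

/-- Vertex type of the threshold hypergraph with string `0^{m 0} (k 0) 0^{m 1} (k 1) ⋯`:
`inl ⟨i, a⟩` is the `a`-th isolated vertex added before the `i`-th domination, and
`inr ⟨i, b⟩` is the `b`-th vertex of the `i`-th dominating set. -/
abbrev TV (d : ℕ) (m k : Fin d → ℕ) : Type :=
  (Σ i : Fin d, Fin (m i)) ⊕ (Σ i : Fin d, Fin (k i))

/-- Vertices present just before the `i`-th domination is applied. -/
def before (d : ℕ) (m k : Fin d → ℕ) (i : Fin d) : Finset (TV d m k) :=
  (((Finset.univ.filter (fun j : Fin d => j ≤ i)).sigma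
      fun j => (Finset.univ : Finset (Fin (m j)))).image Sum.inl) ∪
  (((Finset.univ.filter (fun j : Fin d => j < i)).sigma
      fun j => (Finset.univ : Finset (Fin (k j)))).image Sum.inr)

/-- The `i`-th dominating set. -/
def domSet (d : ℕ) (m k : Fin d → ℕ) (i : Fin d) : Finset (TV d m k) :=
  (Finset.univ : Finset (Fin (k i))).image fun b => Sum.inr ⟨i, b⟩

/-- The edge set of the threshold hypergraph `0^{m 0} (k 0) 0^{m 1} (k 1) ⋯ 0^{m (d-1)} (k (d-1))`:
the `i`-th domination adds the edges `S_i ∪ {u}` for all previously present vertices `u`. -/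
def thrEdges (d : ℕ) (m k : Fin d → ℕ) : Finset (Finset (TV d m k)) :=
  Finset.univ.biUnion fun i : Fin d =>
    (before d m k i).image fun u => insert u (domSet d m k i)

/-!
An isolated vertex added just before the `j`-th domination lies exactly in the edges created by
the dominations `j, …, d - 1`, so its degree is `d - j ≤ d`. A vertex of the `j`-th dominating
set lies in one edge for each vertex present before it, and in one edge for each later
domination, so its degree is `∑_{t ≤ j} m t + k j + (d - 1 - j)`. Since `m t + k ≥ 2` this is
strictly increasing in `j`, and since `m 0 ≥ 1` it is at least `d`, and more than `d` for `j ≥ 1`.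
Thus for `x ≤ d` every dominating vertex has degree at least `x`, which gives the first family of
column sums; and the distinct degrees above `d` are exactly those of the dominating sets
`1, …, d - 1`, which gives `D` and the second family.
-/

section LinearOrder

variable {α : Type*} [LinearOrder α]

theorem List.getD_length_filter_lt {l : List α} (hl : l.Pairwise (· > ·)) {x : α} (hx : x ∈ l)
    (y : α) : l.getD (l.filter (x < ·)).length y = x := by
  obtain ⟨s, t, rfl⟩ := List.append_of_mem hx
  obtain ⟨-, hxt, hst⟩ := List.pairwise_append.1 hl
  have hs : s.filter (x < ·) = s := List.filter_eq_self.2 fun a ha => by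
    simpa using hst a ha x List.mem_cons_self
  have ht : (x :: t).filter (x < ·) = [] := List.filter_eq_nil_iff.2 fun b hb => by
    rcases List.mem_cons.1 hb with rfl | hb
    · simp
    · simpa using le_of_lt (List.rel_of_pairwise_cons hxt hb)
  rw [List.filter_append, hs, ht, List.append_nil,
    List.getD_append_right _ _ _ _ le_rfl, Nat.sub_self, List.getD_cons_zero]

theorem Finset.getD_reverse_sort_card_filter_lt {s : Finset α} {x : α} (hx : x ∈ s) (y : α) :
    ((s.sort (· ≤ ·)).reverse).getD #{z ∈ s | x < z} y = x := by
  have hcard : #{z ∈ s | x < z} = (((s.sort (· ≤ ·)).reverse).filter (x < ·)).length := by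
    rw [List.filter_reverse, List.length_reverse, card_def, filter_val, ← sort_eq s (· ≤ ·),
      Multiset.filter_coe, Multiset.coe_card]
  rw [hcard]
  exact List.getD_length_filter_lt (List.pairwise_reverse.2 (sortedLT_sort s).pairwise)
    (List.mem_reverse.2 ((mem_sort _).2 hx)) y

end LinearOrder

theorem Finset.card_filter_mem_insert {α : Type*} [DecidableEq α] (s t : Finset α) (v : α) :
    #{u ∈ s | v ∈ insert u t} = if v ∈ t then #s else if v ∈ s then 1 else 0 := by
  split_ifs with hvt hvs
  · rw [filter_true_of_mem fun u _ => mem_insert_of_mem hvt]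
  · rw [filter_congr fun u _ => by rw [mem_insert, or_iff_left hvt], filter_eq, if_pos hvs,
      card_singleton]
  · rw [filter_congr fun u _ => by rw [mem_insert, or_iff_left hvt], filter_eq, if_neg hvs,
      card_empty]

theorem Finset.card_filter_lt_image_of_strictMono {α : Type*} [LinearOrder α] {n : ℕ}
    {f : Fin n → α} (hf : StrictMono f) (j : Fin n) :
    #{y ∈ univ.image f | f j < y} = n - 1 - j := by
  rw [filter_image, card_image_of_injective _ hf.injective]
  simp only [hf.lt_iff_lt]
  rw [filter_lt_eq_Ioi, Fin.card_Ioi]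

section Construction

variable {d : ℕ} {m kf : Fin d → ℕ}

@[simp]
theorem inl_mem_before {i j : Fin d} {a : Fin (m j)} :
    (Sum.inl ⟨j, a⟩ : TV d m kf) ∈ before d m kf i ↔ j ≤ i := by
  simp [before]

@[simp]
theorem inr_mem_before {i j : Fin d} {b : Fin (kf j)} :
    (Sum.inr ⟨j, b⟩ : TV d m kf) ∈ before d m kf i ↔ j < i := by
  simp [before]

@[simp]
theorem inl_notMem_domSet {i j : Fin d} {a : Fin (m j)} :
    (Sum.inl ⟨j, a⟩ : TV d m kf) ∉ domSet d m kf i := by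
  simp [domSet]

@[simp]
theorem inr_mem_domSet {i j : Fin d} {b : Fin (kf j)} :
    (Sum.inr ⟨j, b⟩ : TV d m kf) ∈ domSet d m kf i ↔ j = i := by
  simp only [domSet, mem_image, mem_univ, true_and, Sum.inr.injEq]
  constructor
  · rintro ⟨b', h⟩
    exact (congrArg Sigma.fst h).symm
  · rintro rfl
    exact ⟨b, rfl⟩

theorem lt_of_mem_before_of_mem_domSet {i i' : Fin d} {u : TV d m kf}
    (hu : u ∈ before d m kf i) (hu' : u ∈ domSet d m kf i') : i' < i := by
  obtain ⟨b, -, rfl⟩ := mem_image.1 hu'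
  simpa using hu

theorem disjoint_domSet {i i' : Fin d} (h : i ≠ i') :
    Disjoint (domSet d m kf i) (domSet d m kf i') := by
  simp only [disjoint_left, domSet, mem_image, mem_univ, true_and]
  rintro _ ⟨b, rfl⟩ ⟨b', hb'⟩
  exact h (congrArg Sigma.fst (Sum.inr_injective hb')).symm

theorem mem_domSet_of_insert_domSet_eq {i i' : Fin d} {u u' : TV d m kf} (hk : 0 < kf i')
    (hne : i ≠ i') (h : insert u (domSet d m kf i) = insert u' (domSet d m kf i')) :
    u ∈ domSet d m kf i' := by
  have hw : (Sum.inr ⟨i', ⟨0, hk⟩⟩ : TV d m kf) ∈ domSet d m kf i' := by simp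
  rcases mem_insert.1 (h ▸ mem_insert_of_mem hw) with hwu | hwi
  · exact hwu ▸ hw
  · exact absurd hwi (disjoint_right.1 (disjoint_domSet hne) hw)

theorem insert_domSet_inj (hk : ∀ i, 0 < kf i) {i i' : Fin d} {u u' : TV d m kf}
    (hu : u ∈ before d m kf i) (hu' : u' ∈ before d m kf i')
    (h : insert u (domSet d m kf i) = insert u' (domSet d m kf i')) : i = i' ∧ u = u' := by
  obtain rfl : i = i' := by
    by_contra hne
    exact lt_asymm
      (lt_of_mem_before_of_mem_domSet hu (mem_domSet_of_insert_domSet_eq (hk i') hne h))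
      (lt_of_mem_before_of_mem_domSet hu'
        (mem_domSet_of_insert_domSet_eq (hk i) (Ne.symm hne) h.symm))
  refine ⟨rfl, (mem_insert.1 (h ▸ mem_insert_self u _)).resolve_right fun hui => ?_⟩
  exact lt_irrefl i (lt_of_mem_before_of_mem_domSet hu hui)

theorem card_before (i : Fin d) :
    #(before d m kf i) = ∑ j ∈ Iic i, m j + ∑ j ∈ Iio i, kf j := by
  rw [before, card_union_of_disjoint, card_image_of_injective _ Sum.inl_injective,
    card_image_of_injective _ Sum.inr_injective, card_sigma, card_sigma, filter_ge_eq_Iic,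
    filter_gt_eq_Iio]
  · simp
  · simp [disjoint_left]

def thrDegree (d : ℕ) (m kf : Fin d → ℕ) (v : TV d m kf) : ℕ :=
  #{e ∈ thrEdges d m kf | v ∈ e}

theorem thrDegree_eq_sum (hk : ∀ i, 0 < kf i) (v : TV d m kf) :
    thrDegree d m kf v = ∑ i, #{u ∈ before d m kf i | v ∈ insert u (domSet d m kf i)} := by
  rw [thrDegree, thrEdges, filter_biUnion, card_biUnion]
  · refine sum_congr rfl fun i _ => ?_
    rw [filter_image, card_image_of_injOn fun u hu u' hu' h =>
      (insert_domSet_inj hk (mem_filter.1 hu).1 (mem_filter.1 hu').1 h).2]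
  · intro i _ i' _ hne
    simp only [disjoint_left, mem_filter, mem_image]
    rintro e ⟨⟨u, hu, rfl⟩, -⟩ ⟨⟨u', hu', he⟩, -⟩
    exact hne (insert_domSet_inj hk hu' hu he).1.symm

theorem thrDegree_inl (hk : ∀ i, 0 < kf i) (j : Fin d) (a : Fin (m j)) :
    thrDegree d m kf (Sum.inl ⟨j, a⟩) = d - j := by
  simp only [thrDegree_eq_sum hk, card_filter_mem_insert, inl_notMem_domSet, inl_mem_before,
    if_false]
  rw [← card_filter, filter_le_eq_Ici, Fin.card_Ici]

theorem thrDegree_inr (hk : ∀ i, 0 < kf i) (j : Fin d) (b : Fin (kf j)) :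
    thrDegree d m kf (Sum.inr ⟨j, b⟩) = #(before d m kf j) + (d - 1 - j) := by
  simp only [thrDegree_eq_sum hk, card_filter_mem_insert, inr_mem_domSet, inr_mem_before]
  have hsplit : ∀ i, (if j = i then #(before d m kf i) else if j < i then 1 else 0)
      = (if j = i then #(before d m kf j) else 0) + if j < i then 1 else 0 := by
    intro i
    split_ifs with h1 h2 <;> simp_all
  rw [sum_congr rfl fun i _ => hsplit i, sum_add_distrib, sum_ite_eq, if_pos (mem_univ _),
    ← card_filter, filter_lt_eq_Ioi, Fin.card_Ioi]

end Construction

section Constant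

variable {d k : ℕ} {m : Fin d → ℕ}

def domDegree (d : ℕ) (m : Fin d → ℕ) (k : ℕ) (j : Fin d) : ℕ :=
  ∑ t ∈ Iic j, m t + k * j + (d - 1 - j)

theorem thrDegree_inr_const (hk : 0 < k) (j : Fin d) (b : Fin k) :
    thrDegree d m (fun _ => k) (Sum.inr ⟨j, b⟩) = domDegree d m k j := by
  rw [thrDegree_inr fun _ => hk, card_before, sum_const, Fin.card_Iio, smul_eq_mul, mul_comm,
    domDegree]

theorem card_filter_le_thrDegree (hk : 0 < k) (x : ℕ) :
    #{v | x ≤ thrDegree d m (fun _ => k) v}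
      = ∑ j : Fin d with x ≤ d - j.val, m j + k * #{j | x ≤ domDegree d m k j} := by
  rw [card_filter, Fintype.sum_sum_type, ← univ_sigma_univ, sum_sigma, ← univ_sigma_univ,
    sum_sigma]
  simp only [thrDegree_inl fun _ => hk, thrDegree_inr_const hk, sum_const, card_univ,
    Fintype.card_fin, smul_eq_mul, mul_ite, mul_one, mul_zero]
  rw [← sum_filter, ← sum_filter, sum_const, smul_eq_mul, mul_comm k]

theorem domDegree_strictMono (hmk : ∀ i, 2 ≤ m i + k) : StrictMono (domDegree d m k) := by
  intro j j' hjj'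
  have hsplit : ∑ t ∈ Iic j', m t = ∑ t ∈ Iic j, m t + ∑ t ∈ Ioc j j', m t := by
    rw [← Iic_union_Ioc_eq_Iic hjj'.le, sum_union (Iic_disjoint_Ioc le_rfl)]
  have hgain : #(Ioc j j') • 2 ≤ ∑ t ∈ Ioc j j', (m t + k) :=
    card_nsmul_le_sum _ _ _ fun t _ => hmk t
  rw [sum_add_distrib, sum_const, Fin.card_Ioc, smul_eq_mul, smul_eq_mul] at hgain
  have hmul : k * j' = k * j + (j' - j) * k := by
    rw [mul_comm _ k, ← Nat.mul_add, Nat.add_sub_cancel' (Fin.le_def.1 hjj'.le)]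
  have := Fin.lt_def.1 hjj'
  have := j'.isLt
  rw [domDegree, domDegree, hsplit, hmul]
  omega

theorem domDegree_zero (hd : 0 < d) : domDegree d m k ⟨0, hd⟩ = m ⟨0, hd⟩ + (d - 1) := by
  have : Iic (⟨0, hd⟩ : Fin d) = {⟨0, hd⟩} := by
    ext j
    simp [Fin.le_def, Fin.ext_iff]
  simp [domDegree, this]

theorem le_domDegree (hd : 0 < d) (hm : 1 ≤ m ⟨0, hd⟩) (hmk : ∀ i, 2 ≤ m i + k) (j : Fin d) :
    d ≤ domDegree d m k j :=
  calc d ≤ domDegree d m k ⟨0, hd⟩ := by rw [domDegree_zero]; omega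
    _ ≤ domDegree d m k j := (domDegree_strictMono hmk).monotone (Nat.zero_le _)

theorem lt_domDegree (hd : 0 < d) (hm : 1 ≤ m ⟨0, hd⟩) (hmk : ∀ i, 2 ≤ m i + k) {j : Fin d}
    (hj : 0 < j.val) : d < domDegree d m k j :=
  (le_domDegree hd hm hmk ⟨0, hd⟩).trans_lt (domDegree_strictMono hmk hj)

theorem filter_lt_image_thrDegree (hk : 0 < k) {x : ℕ} (hx : d ≤ x) :
    {y ∈ univ.image (thrDegree d m fun _ => k) | x < y}
      = {y ∈ univ.image (domDegree d m k) | x < y} := by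
  ext y
  simp only [mem_filter, mem_image, mem_univ, true_and, and_congr_left_iff]
  intro hxy
  constructor
  · rintro ⟨⟨j, a⟩ | ⟨j, b⟩, rfl⟩
    · rw [thrDegree_inl fun _ => hk] at hxy
      omega
    · exact ⟨j, (thrDegree_inr_const hk j b).symm⟩
  · rintro ⟨j, rfl⟩
    exact ⟨Sum.inr ⟨j, ⟨0, hk⟩⟩, thrDegree_inr_const hk j _⟩

end Constant

/-- Column sums of the Ferrer's diagram of the degree sequence of a `k`-threshold
hypergraph: `C_i = ∑_{j=1}^{d-i+1} m_j + k·d` for `i = 1, …, d`, and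
`C_{D_{d-i+1}} = k(d-i+1)` for `i = 2, …, d` (all `1`-indexed). -/
theorem stmt_19 (d : ℕ) (hd : 0 < d) (m : Fin d → ℕ) (k : ℕ)
    (hm : 1 ≤ m ⟨0, hd⟩) (hk : 1 ≤ k) (hmk : ∀ i : Fin d, 2 ≤ m i + k) :
    let deg : TV d m (fun _ => k) → ℕ :=
      fun v => ((thrEdges d m fun _ => k).filter (fun e => v ∈ e)).card
    let D : ℕ → ℕ :=
      fun i => (((Finset.univ.image deg).sort (· ≤ ·)).reverse).getD (i - 1) 0
    let C : ℕ → ℕ := fun j => (Finset.univ.filter (fun v => j ≤ deg v)).card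
    (∀ i, 1 ≤ i → i ≤ d →
        C i = (∑ j ∈ Finset.univ.filter (fun j : Fin d => j.val ≤ d - i), m j) + k * d) ∧
      ∀ i, 2 ≤ i → i ≤ d → C (D (d - i + 1)) = k * (d - i + 1) := by
  intro deg D C
  have hC (x : ℕ) :
      C x = ∑ j : Fin d with x ≤ d - j.val, m j + k * #{j | x ≤ domDegree d m k j} :=
    card_filter_le_thrDegree hk x
  have hmono := domDegree_strictMono hmk
  refine ⟨fun i hi1 hid => ?_, fun i hi2 hid => ?_⟩
  · rw [hC, filter_true_of_mem fun j _ => hid.trans (le_domDegree hd hm hmk j), card_univ,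
      Fintype.card_fin]
    congr 1
    exact sum_congr (filter_congr fun j _ => by omega) fun _ _ => rfl
  · set j0 : Fin d := ⟨i - 1, by omega⟩
    have hx : d < domDegree d m k j0 := lt_domDegree hd hm hmk (show 0 < i - 1 by omega)
    have hD : D (d - i + 1) = domDegree d m k j0 := by
      have hmem : domDegree d m k j0 ∈ univ.image (thrDegree d m fun _ => k) :=
        mem_image.2 ⟨Sum.inr ⟨j0, ⟨0, hk⟩⟩, mem_univ _, thrDegree_inr_const hk j0 _⟩
      have := getD_reverse_sort_card_filter_lt hmem 0
      rwa [filter_lt_image_thrDegree hk hx.le, card_filter_lt_image_of_strictMono hmono,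
        show d - 1 - j0 = d - i + 1 - 1 by simp [j0]; omega] at this
    rw [hD, hC, filter_false_of_mem fun j _ => by omega, sum_empty, zero_add]
    simp only [hmono.le_iff_le]
    rw [filter_le_eq_Ici, Fin.card_Ici, show d - j0 = d - i + 1 by simp [j0]; omega]
end
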